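/- arXiv:2009.07131 — 4 statements merged into one kernel-verified Lean document; each statement's English description precedes it below -/
import Mathlib

section
/- Let μ ∈ ℝ and ρ > 0 with |μ| < 1/ρ. Viewing K_ρ as the function K_ρ(φ, s) = K_ρ(s) on [0, 2π) × ℝ, for every x ∈ ℝ² one has T_{−μ}♯ K_ρ(x) = 2 ∫_0^{1/ρ} σ J₀(‖x‖ σ) dσ; in particular the left-hand side does not depend on μ. -/
open MeasureTheory Real Filter

noncomputable section

/-- The Euclidean plane. -/
abbrev R2 := EuclideanSpace ℝ (Fin 2)

/-- The unit vector `θ(φ) = (cos φ, sin φ)`. -/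
def theta (φ : ℝ) : R2 := (WithLp.equiv 2 _).symm ![Real.cos φ, Real.sin φ]

/-- The perpendicular unit vector `θ⊥(φ) = (-sin φ, cos φ)`. -/
def thetaPerp (φ : ℝ) : R2 := (WithLp.equiv 2 _).symm ![-Real.sin φ, Real.cos φ]

/-- The Euclidean dot product on `ℝ²`. -/
def dot (x y : R2) : ℝ := inner ℝ x y

/-- The dual transform `T_μ♯ g(x) = ∫_0^{2π} e^{μ x·θ⊥(φ)} g(φ, x·θ(φ)) dφ`. -/
def dualERT (μ : ℝ) (g : ℝ → ℝ → ℝ) (x : R2) : ℝ :=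
  ∫ φ in (0:ℝ)..(2 * π), Real.exp (μ * dot x (thetaPerp φ)) * g φ (dot x (theta φ))

/-- The FBP kernel `K_ρ(s) = (1/π) ∫_{|μ|}^{√(ρ⁻² + μ²)} r cos(s r) dr`. -/
def Krho (μ ρ : ℝ) (s : ℝ) : ℝ :=
  (1 / π) * ∫ r in (|μ|)..(Real.sqrt (ρ⁻¹ ^ 2 + μ ^ 2)), r * Real.cos (s * r)

/-- The Bessel function of the first kind of order `0`,
`J₀(r) = (1/(2π)) ∫_0^{2π} e^{i r sin φ} dφ` (complex-valued integral). -/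
def J0 (r : ℝ) : ℂ :=
  (1 / (2 * π) : ℝ) * ∫ φ in (0:ℝ)..(2 * π), Complex.exp (Complex.I * (r * Real.sin φ : ℝ))

/-!
Substituting `r = √(σ² + μ²)` gives `K_ρ(s) = π⁻¹ ∫₀^{1/ρ} σ cos (s √(σ² + μ²)) dσ`, and after
exchanging the integrals the whole `μ`-dependence sits in
`∫₀^{2π} e^{-μ p} cos (q √(σ² + μ²)) dφ` with `q = x·θ`, `p = x·θ⊥`, so that `q' = p`, `p' = -q`.
Its derivative in `μ` is the integral of the `φ`-derivative of the periodic function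
`e^{-μ p} sin (q √(σ² + μ²)) / √(σ² + μ²)`, so it equals its value at `μ = 0`. Writing
`q = ‖x‖ sin (φ + β)` and shifting by `β` turns what remains into `2π J₀(‖x‖ σ)`; `J₀` is real
because `φ ↦ sin (r sin φ)` is odd under `φ ↦ 2π - φ`.
-/

open Set

variable {E : Type*} [NormedAddCommGroup E] [NormedSpace ℝ E]

theorem intervalIntegral_intervalIntegral_swap_of_continuous {F : ℝ → ℝ → E}
    (hF : Continuous F.uncurry) (a b c d : ℝ) :
    ∫ x in a..b, ∫ y in c..d, F x y = ∫ y in c..d, ∫ x in a..b, F x y :=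
  intervalIntegral_intervalIntegral_swap <|
    (hF.continuousOn.integrableOn_compact (isCompact_uIcc.prod isCompact_uIcc)).mono_set
      (prod_mono uIoc_subset_uIcc uIoc_subset_uIcc)

theorem intervalIntegral_eq_of_hasDerivAt_of_integral_eq_zero [CompleteSpace E]
    {F f : ℝ → ℝ → E} {a b : ℝ}
    (hF : ∀ t φ, HasDerivAt (F · φ) (f t φ) t) (hf : Continuous f.uncurry)
    (hFi : ∀ t, IntervalIntegrable (F t) volume a b)
    (hf₀ : ∀ t, ∫ φ in a..b, f t φ = 0) (s t : ℝ) :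
    ∫ φ in a..b, F s φ = ∫ φ in a..b, F t φ := by
  have hdiff : ∀ φ, F s φ - F t φ = ∫ u in t..s, f u φ := fun φ =>
    (intervalIntegral.integral_eq_sub_of_hasDerivAt (fun u _ => hF u φ)
      ((hf.uncurry_right φ).intervalIntegrable _ _)).symm
  rw [← sub_eq_zero, ← intervalIntegral.integral_sub (hFi s) (hFi t)]
  simp_rw [hdiff]
  rw [intervalIntegral_intervalIntegral_swap_of_continuous (F := fun φ u => f u φ)
    (hf.comp continuous_swap)]
  simp [hf₀]

theorem integral_mul_comp_sq {g : ℝ → ℝ} (hg : Continuous g) (a b : ℝ) :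
    ∫ σ in a..b, σ * g (σ ^ 2) = (1 / 2) * ∫ u in a ^ 2..b ^ 2, g u := by
  have h := intervalIntegral.integral_comp_mul_deriv (a := a) (b := b) (f := (· ^ 2))
    (fun y _ => by simpa using hasDerivAt_pow 2 y)
    (by fun_prop : Continuous fun y : ℝ => 2 * y).continuousOn hg
  rw [← h, ← intervalIntegral.integral_const_mul]
  congr 1 with σ
  simp only [Function.comp]
  ring

theorem Function.Odd.intervalIntegral_comp_sin_eq_zero {g : ℝ → E} (hg : g.Odd) :
    ∫ φ in (0:ℝ)..2 * π, g (sin φ) = 0 := by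
  have hrefl : ∀ φ, g (sin (2 * π - φ)) = -g (sin φ) := fun φ => by rw [sin_two_pi_sub, hg]
  have h := intervalIntegral.integral_comp_sub_left (a := 0) (b := 2 * π)
    (fun φ => g (sin φ)) (2 * π)
  simp only [hrefl, intervalIntegral.integral_neg, sub_zero, sub_self] at h
  have h2 : (2 : ℝ) • ∫ φ in (0:ℝ)..2 * π, g (sin φ) = 0 := by
    rw [two_smul]; nth_rewrite 1 [← h]; exact neg_add_cancel _
  exact (smul_eq_zero.mp h2).resolve_left two_ne_zero

theorem intervalIntegral_comp_mul_cos_add_mul_sin (f : ℝ → E) (A B : ℝ) :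
    ∫ φ in (0:ℝ)..2 * π, f (A * cos φ + B * sin φ)
      = ∫ φ in (0:ℝ)..2 * π, f (√(A ^ 2 + B ^ 2) * sin φ) := by
  set z : ℂ := ⟨B, A⟩
  have hz : ‖z‖ = √(A ^ 2 + B ^ 2) := by
    rw [Complex.norm_def, Complex.normSq_mk, add_comm]; ring_nf
  have hc : ‖z‖ * cos z.arg = B := Complex.norm_mul_cos_arg z
  have hs : ‖z‖ * sin z.arg = A := Complex.norm_mul_sin_arg z
  have hrot : ∀ φ, A * cos φ + B * sin φ = ‖z‖ * sin (φ + z.arg) := fun φ => by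
    rw [sin_add]
    linear_combination (-cos φ) * hs - sin φ * hc
  simp_rw [hrot, ← hz]
  have hper : Function.Periodic (fun φ => f (‖z‖ * sin φ)) (2 * π) := fun φ => by
    simp only [sin_add_two_pi]
  rw [intervalIntegral.integral_comp_add_right (fun φ => f (‖z‖ * sin φ)), zero_add,
    add_comm, hper.intervalIntegral_add_eq z.arg 0, zero_add]

section HarmonicPair

variable {p q : ℝ → ℝ}

theorem hasDerivAt_exp_mul_cos_mul_sqrt (P Q : ℝ) {σ : ℝ} (hσ : σ ≠ 0) (t : ℝ) :
    HasDerivAt (fun t => exp (-(t * P)) * cos (Q * √(σ ^ 2 + t ^ 2)))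
      (-(exp (-(t * P)) * (t * Q / √(σ ^ 2 + t ^ 2) * sin (Q * √(σ ^ 2 + t ^ 2))
        + P * cos (Q * √(σ ^ 2 + t ^ 2))))) t := by
  have hpos : 0 < σ ^ 2 + t ^ 2 := by positivity
  have hsqrt : HasDerivAt (fun t => √(σ ^ 2 + t ^ 2)) (t / √(σ ^ 2 + t ^ 2)) t := by
    have hsum : HasDerivAt (fun t => σ ^ 2 + t ^ 2) (2 * t) t := by
      simpa using (hasDerivAt_pow 2 t).const_add (σ ^ 2)
    convert hsum.sqrt hpos.ne' using 1
    field_simp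
  refine (((hasDerivAt_id t).mul_const P).neg.exp.mul (hsqrt.const_mul Q).cos).congr_deriv ?_
  simp only [Pi.neg_apply, id]
  ring

theorem hasDerivAt_exp_mul_sin_mul_div (hq : ∀ φ, HasDerivAt q (p φ) φ)
    (hp : ∀ φ, HasDerivAt p (-q φ) φ) (t : ℝ) {R : ℝ} (hR : R ≠ 0) (φ : ℝ) :
    HasDerivAt (fun φ => exp (-(t * p φ)) * sin (q φ * R) / R)
      (exp (-(t * p φ)) * (t * q φ / R * sin (q φ * R) + p φ * cos (q φ * R))) φ := by
  refine ((((hp φ).const_mul t).neg.exp.mul ((hq φ).mul_const R).sin).div_const R).congr_deriv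
    ?_
  simp only [Pi.neg_apply]
  field_simp

theorem intervalIntegral_exp_mul_cos_mul_sqrt_eq (hq : ∀ φ, HasDerivAt q (p φ) φ)
    (hp : ∀ φ, HasDerivAt p (-q φ) φ) {a b : ℝ} (hpab : p a = p b) (hqab : q a = q b)
    (μ : ℝ) {σ : ℝ} (hσ : σ ≠ 0) :
    ∫ φ in a..b, exp (-(μ * p φ)) * cos (q φ * √(σ ^ 2 + μ ^ 2))
      = ∫ φ in a..b, cos (q φ * σ) := by
  have hpc : Continuous p := continuous_iff_continuousAt.2 fun φ => (hp φ).continuousAt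
  have hqc : Continuous q := continuous_iff_continuousAt.2 fun φ => (hq φ).continuousAt
  have hR : ∀ t, √(σ ^ 2 + t ^ 2) ≠ 0 := fun t => (sqrt_pos.2 (by positivity)).ne'
  have hF0 : ∀ φ, exp (-(0 * p φ)) * cos (q φ * √(σ ^ 2 + 0 ^ 2)) = cos (q φ * σ) :=
    fun φ => by rcases abs_choice σ with h | h <;> simp [sqrt_sq_eq_abs, h]
  rw [← intervalIntegral.integral_congr fun φ _ => hF0 φ]
  refine intervalIntegral_eq_of_hasDerivAt_of_integral_eq_zero
    (fun t φ => hasDerivAt_exp_mul_cos_mul_sqrt (p φ) (q φ) hσ t)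
    ?_ (fun t => by apply Continuous.intervalIntegrable; fun_prop) (fun t => ?_) μ 0
  · fun_prop (disch := exact fun _ => hR _)
  · rw [intervalIntegral.integral_neg, intervalIntegral.integral_eq_sub_of_hasDerivAt
      (fun φ _ => hasDerivAt_exp_mul_sin_mul_div hq hp t (hR t) φ)
      (by apply Continuous.intervalIntegrable; fun_prop), hpab, hqab, sub_self, neg_zero]

end HarmonicPair

theorem Krho_eq_integral (μ ρ s : ℝ) :
    Krho μ ρ s = (1 / π) * ∫ σ in (0:ℝ)..1 / ρ, σ * cos (s * √(σ ^ 2 + μ ^ 2)) := by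
  have hroot : ∀ r ∈ uIcc |μ| √(ρ⁻¹ ^ 2 + μ ^ 2), r * cos (s * r) = r * cos (s * √(r ^ 2)) :=
    fun r hr => by rw [sqrt_sq ((le_min (abs_nonneg _) (sqrt_nonneg _)).trans hr.1)]
  rw [Krho, intervalIntegral.integral_congr hroot,
    integral_mul_comp_sq (g := fun u => cos (s * √u)) (by fun_prop),
    integral_mul_comp_sq (g := fun u => cos (s * √(u + μ ^ 2))) (by fun_prop),
    intervalIntegral.integral_comp_add_right (fun u => cos (s * √u)), sq_abs,
    sq_sqrt (by positivity), one_div ρ, inv_pow]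
  simp

theorem dot_theta (x : R2) (φ : ℝ) : dot x (theta φ) = x 0 * cos φ + x 1 * sin φ := by
  simp [dot, theta, PiLp.inner_apply, Fin.sum_univ_two, mul_comm]

theorem dot_thetaPerp (x : R2) (φ : ℝ) : dot x (thetaPerp φ) = x 1 * cos φ - x 0 * sin φ := by
  simp [dot, thetaPerp, PiLp.inner_apply, Fin.sum_univ_two, mul_comm, sub_eq_neg_add]

theorem hasDerivAt_dot_theta (x : R2) (φ : ℝ) :
    HasDerivAt (fun φ => dot x (theta φ)) (dot x (thetaPerp φ)) φ := by
  simp only [dot_theta, dot_thetaPerp]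
  exact (((hasDerivAt_cos φ).const_mul _).add ((hasDerivAt_sin φ).const_mul _)).congr_deriv
    (by ring)

theorem hasDerivAt_dot_thetaPerp (x : R2) (φ : ℝ) :
    HasDerivAt (fun φ => dot x (thetaPerp φ)) (-dot x (theta φ)) φ := by
  simp only [dot_theta, dot_thetaPerp]
  exact (((hasDerivAt_cos φ).const_mul _).sub ((hasDerivAt_sin φ).const_mul _)).congr_deriv
    (by ring)

theorem norm_eq_sqrt_sq_add_sq (x : R2) : ‖x‖ = √(x 0 ^ 2 + x 1 ^ 2) := by
  simp [EuclideanSpace.norm_eq, Fin.sum_univ_two]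

theorem intervalIntegral_cos_mul_dot_theta (x : R2) (σ : ℝ) :
    ∫ φ in (0:ℝ)..2 * π, cos (dot x (theta φ) * σ)
      = ∫ φ in (0:ℝ)..2 * π, cos (‖x‖ * σ * sin φ) := by
  simp only [dot_theta, norm_eq_sqrt_sq_add_sq, mul_right_comm _ σ]
  exact intervalIntegral_comp_mul_cos_add_mul_sin (fun y => cos (y * σ)) _ _

theorem J0_eq_ofReal (r : ℝ) :
    J0 r = ((1 / (2 * π) * ∫ φ in (0:ℝ)..2 * π, cos (r * sin φ) : ℝ) : ℂ) := by
  have hsin : ∫ φ in (0:ℝ)..2 * π, sin (r * sin φ) = 0 :=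
    Function.Odd.intervalIntegral_comp_sin_eq_zero (g := fun y => sin (r * y))
      fun y => by simp only [mul_neg, sin_neg]
  have hexp : ∀ φ : ℝ, Complex.exp (Complex.I * (r * sin φ : ℝ))
      = (cos (r * sin φ) : ℂ) + (sin (r * sin φ) : ℂ) * Complex.I := fun φ => by
    rw [mul_comm, Complex.exp_mul_I, Complex.ofReal_cos, Complex.ofReal_sin]
  rw [J0, intervalIntegral.integral_congr fun φ _ => hexp φ, intervalIntegral.integral_add
      (by apply Continuous.intervalIntegrable; fun_prop)
      (by apply Continuous.intervalIntegrable; fun_prop),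
    intervalIntegral.integral_mul_const, intervalIntegral.integral_ofReal,
    intervalIntegral.integral_ofReal, hsin]
  push_cast
  ring

theorem dualERT_neg_Krho (μ ρ : ℝ) (x : R2) :
    dualERT (-μ) (fun _ s => Krho μ ρ s) x
      = (1 / π) * ∫ σ in (0:ℝ)..1 / ρ, σ * ∫ φ in (0:ℝ)..2 * π, cos (‖x‖ * σ * sin φ) := by
  set p := fun φ => dot x (thetaPerp φ)
  set q := fun φ => dot x (theta φ)
  have hpc : Continuous p := by simp only [p, dot_thetaPerp]; fun_prop
  have hqc : Continuous q := by simp only [q, dot_theta]; fun_prop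
  have hinner : ∀ σ,
      σ * ∫ φ in (0:ℝ)..2 * π, exp (-(μ * p φ)) * cos (q φ * √(σ ^ 2 + μ ^ 2))
        = σ * ∫ φ in (0:ℝ)..2 * π, cos (‖x‖ * σ * sin φ) := by
    intro σ
    rcases eq_or_ne σ 0 with rfl | hσ
    · simp only [zero_mul]
    rw [intervalIntegral_exp_mul_cos_mul_sqrt_eq (hasDerivAt_dot_theta x)
      (hasDerivAt_dot_thetaPerp x) (by simp [thetaPerp]) (by simp [theta]) μ hσ,
      intervalIntegral_cos_mul_dot_theta]
  calc dualERT (-μ) (fun _ s => Krho μ ρ s) x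
      = (1 / π) * ∫ φ in (0:ℝ)..2 * π, ∫ σ in (0:ℝ)..1 / ρ,
          σ * (exp (-(μ * p φ)) * cos (q φ * √(σ ^ 2 + μ ^ 2))) := by
        rw [dualERT, ← intervalIntegral.integral_const_mul]
        refine intervalIntegral.integral_congr fun φ _ => ?_
        simp only [Krho_eq_integral, ← intervalIntegral.integral_const_mul, neg_mul]
        congr 1 with σ
        simp only [p, q]
        ring
    _ = (1 / π) * ∫ σ in (0:ℝ)..1 / ρ,
          σ * ∫ φ in (0:ℝ)..2 * π, exp (-(μ * p φ)) * cos (q φ * √(σ ^ 2 + μ ^ 2)) := by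
        rw [intervalIntegral_intervalIntegral_swap_of_continuous (by fun_prop)]
        simp only [intervalIntegral.integral_const_mul]
    _ = _ := by simp only [hinner]

theorem dual_of_kernel_general (μ ρ : ℝ) (x : R2) :
    (dualERT (-μ) (fun _ s => Krho μ ρ s) x : ℂ) =
      2 * ∫ σ in (0:ℝ)..(1 / ρ), (σ : ℂ) * J0 (‖x‖ * σ) := by
  have hJ : ∀ σ : ℝ, (σ : ℂ) * J0 (‖x‖ * σ)
      = ((1 / (2 * π) * (σ * ∫ φ in (0:ℝ)..2 * π, cos (‖x‖ * σ * sin φ)) : ℝ) : ℂ) := by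
    intro σ
    rw [J0_eq_ofReal]
    push_cast
    ring
  simp_rw [hJ, intervalIntegral.integral_ofReal, intervalIntegral.integral_const_mul,
    dualERT_neg_Krho]
  rw [show (1 / π : ℝ) = 2 * (1 / (2 * π)) by field_simp]
  push_cast
  ring

/-- `T_{-μ}♯ K_ρ(x) = 2 ∫_0^{1/ρ} σ J₀(‖x‖ σ) dσ`. -/
theorem dual_of_kernel (μ ρ : ℝ) (hρ : 0 < ρ) (hμ : |μ| < 1 / ρ) (x : R2) :
    (dualERT (-μ) (fun _ s => Krho μ ρ s) x : ℂ) =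
      2 * ∫ σ in (0:ℝ)..(1 / ρ), (σ : ℂ) * J0 (‖x‖ * σ) :=
  dual_of_kernel_general μ ρ x
end
end

section
/- Let μ ∈ ℝ, let f : ℝ² → ℝ be bounded and measurable, vanishing outside the closed unit ball B₁, and let g : [0, 2π) × ℝ → ℝ be bounded and measurable with g(φ, ·) supported in a fixed compact set for all φ. Then for every x ∈ ℝ², T_{−μ}♯ (g ⋆ T_μ f)(x) = ((T_{−μ}♯ g) ⋆ f)(x), where on the right-hand side ⋆ denotes convolution on ℝ², i.e. ((T_{−μ}♯ g) ⋆ f)(x) = ∫_{ℝ²} T_{−μ}♯ g(x − y) f(y) dy. -/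
/-! In the rotated coordinates `y = t θ(φ) + u θ⊥(φ)`, which preserve Lebesgue measure, the
convolution becomes `(g ⋆ T_μ f)(φ, s) = ∫ g(φ, s - y·θ) e^{μ y·θ⊥} f(y) dy`. At `s = x·θ` the
weight `e^{-μ x·θ⊥}` of the dual transform merges with `e^{μ y·θ⊥}` into `e^{-μ (x - y)·θ⊥}`,
and exchanging the `φ`- and `y`-integrals (the integrand is bounded and vanishes for `|y| > 1`)
gives `((T_{-μ}♯ g) ⋆ f)(x)`. -/

open MeasureTheory Real Filter

noncomputable section

/-- The exponential Radon transform
`T_μ f(φ, s) = ∫ e^{μ t} f(s θ(φ) + t θ⊥(φ)) dt`. -/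
def ERT (μ : ℝ) (f : R2 → ℝ) (φ s : ℝ) : ℝ :=
  ∫ t : ℝ, Real.exp (μ * t) * f (s • theta φ + t • thetaPerp φ)

/-- Convolution in the second variable on the cylinder. -/
def convZ (g h : ℝ → ℝ → ℝ) (φ s : ℝ) : ℝ := ∫ t : ℝ, g φ (s - t) * h φ t


open Function

section OrthonormalBasis

variable {E : Type*} [NormedAddCommGroup E] [InnerProductSpace ℝ E]
  (b : OrthonormalBasis (Fin 2) ℝ E)

lemma OrthonormalBasis.inner_smul_add_smul_zero (t u : ℝ) :
    inner ℝ (t • b 0 + u • b 1) (b 0) = t := by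
  simp [inner_add_left, real_inner_smul_left]

lemma OrthonormalBasis.inner_smul_add_smul_one (t u : ℝ) :
    inner ℝ (t • b 0 + u • b 1) (b 1) = u := by
  simp [inner_add_left, real_inner_smul_left]

lemma OrthonormalBasis.abs_inner_le_norm (y : E) (i : Fin 2) : |inner ℝ y (b i)| ≤ ‖y‖ := by
  simpa [b.norm_eq_one] using abs_real_inner_le_norm y (b i)

variable [MeasurableSpace E] [BorelSpace E]

def OrthonormalBasis.prodMeasurableEquiv : ℝ × ℝ ≃ᵐ E :=
  (MeasurableEquiv.finTwoArrow.symm.trans (MeasurableEquiv.toLp 2 (Fin 2 → ℝ))).trans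
    b.measurableEquiv.symm

lemma OrthonormalBasis.prodMeasurableEquiv_apply (p : ℝ × ℝ) :
    b.prodMeasurableEquiv p = p.1 • b 0 + p.2 • b 1 := by
  show b.repr.symm (WithLp.toLp 2 ![p.1, p.2]) = _
  simp [← b.sum_repr_symm, Fin.sum_univ_two]

lemma OrthonormalBasis.measurePreserving_prodMeasurableEquiv [FiniteDimensional ℝ E] :
    MeasurePreserving b.prodMeasurableEquiv :=
  ((volume_preserving_finTwoArrow ℝ).symm.trans
    (EuclideanSpace.volume_preserving_symm_measurableEquiv_toLp (Fin 2)).symm).trans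
    b.measurePreserving_measurableEquiv.symm

end OrthonormalBasis

lemma orthonormal_theta_thetaPerp (φ : ℝ) : Orthonormal ℝ ![theta φ, thetaPerp φ] := by
  simp [theta, thetaPerp, EuclideanSpace.norm_eq, PiLp.inner_apply, Fin.sum_univ_two]
  ring

def frame (φ : ℝ) : OrthonormalBasis (Fin 2) ℝ R2 :=
  OrthonormalBasis.mk (orthonormal_theta_thetaPerp φ)
    ((orthonormal_theta_thetaPerp φ).linearIndependent.span_eq_top_of_card_eq_finrank'
      (by simp)).ge

@[simp] lemma frame_zero (φ : ℝ) : frame φ 0 = theta φ := by simp [frame]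
@[simp] lemma frame_one (φ : ℝ) : frame φ 1 = thetaPerp φ := by simp [frame]

lemma continuous_theta : Continuous theta :=
  (PiLp.continuous_toLp 2 _).comp (by fun_prop)

lemma continuous_thetaPerp : Continuous thetaPerp :=
  (PiLp.continuous_toLp 2 _).comp (by fun_prop)

lemma abs_dot_thetaPerp_le (y : R2) (φ : ℝ) : |dot y (thetaPerp φ)| ≤ ‖y‖ := by
  simpa [dot] using (frame φ).abs_inner_le_norm y 1

lemma integrable_of_abs_le_of_eq_zero_off {α : Type*} [MeasurableSpace α] {ν : Measure α}
    {h : α → ℝ} {s : Set α} (hs : MeasurableSet s) (hνs : ν s ≠ ⊤)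
    (hm : AEStronglyMeasurable h ν) (C : ℝ) (hb : ∀ a ∈ s, |h a| ≤ C)
    (h0 : ∀ a ∉ s, h a = 0) : Integrable h ν := by
  have : IsFiniteMeasure (ν.restrict s) := isFiniteMeasure_restrict.2 hνs
  refine (integrableOn_iff_integrable_of_support_subset (s := s) fun a ha => ?_).1
    (Integrable.of_bound hm.restrict C (ae_restrict_of_forall_mem hs hb))
  by_contra h'; exact ha (h0 a h')

lemma exp_mul_le_exp_abs_mul {a b c : ℝ} (h : |b| ≤ c) : exp (a * b) ≤ exp (|a| * c) :=
  exp_le_exp.2 <| (le_abs_self _).trans <|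
    (abs_mul a b).trans_le (mul_le_mul_of_nonneg_left h (abs_nonneg a))

section Transforms

variable {f : R2 → ℝ} {Mf : ℝ} {g : ℝ → ℝ → ℝ} {Mg : ℝ}

lemma convZ_ERT_eq_integral (μ : ℝ) (hfm : Measurable f) (hfb : ∀ x, |f x| ≤ Mf)
    (hfsupp : ∀ x ∉ Metric.closedBall (0 : R2) 1, f x = 0) (hgm : Measurable (uncurry g))
    (hgb : ∀ φ s, |g φ s| ≤ Mg) (φ s : ℝ) :
    convZ g (ERT μ f) φ s
      = ∫ y, g φ (s - dot y (theta φ)) * (exp (μ * dot y (thetaPerp φ)) * f y) := by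
  set F : R2 → ℝ := fun y => g φ (s - dot y (theta φ)) * (exp (μ * dot y (thetaPerp φ)) * f y)
  have hF : Integrable F := by
    refine integrable_of_abs_le_of_eq_zero_off (s := Metric.closedBall 0 1)
      measurableSet_closedBall measure_closedBall_lt_top.ne ?_ (Mg * (exp (|μ| * 1) * Mf))
      (fun y hy => ?_) (fun y hy => by simp [F, hfsupp y hy])
    · exact ((hgm.comp (measurable_const.prodMk (measurable_const.sub
        (continuous_id.inner continuous_const).measurable))).mul
        (((continuous_const.mul (continuous_id.inner continuous_const)).rexp).measurable.mul
          hfm)).aestronglyMeasurable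
    · have hMg : 0 ≤ Mg := (abs_nonneg _).trans (hgb 0 0)
      have hy : |dot y (thetaPerp φ)| ≤ 1 :=
        (abs_dot_thetaPerp_le y φ).trans (mem_closedBall_zero_iff.1 hy)
      simp only [F, abs_mul, abs_exp]
      gcongr ?_ * (?_ * ?_)
      · exact hgb _ _
      · exact exp_mul_le_exp_abs_mul hy
      · exact hfb y
  set e := (frame φ).prodMeasurableEquiv
  have he : MeasurePreserving e := (frame φ).measurePreserving_prodMeasurableEquiv
  have hFe : ∀ t u : ℝ, F (e (t, u))
      = g φ (s - t) * (exp (μ * u) * f (t • theta φ + u • thetaPerp φ)) := by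
    intro t u
    have h0 := (frame φ).inner_smul_add_smul_zero t u
    have h1 := (frame φ).inner_smul_add_smul_one t u
    simp only [frame_zero, frame_one] at h0 h1
    simp [F, e, OrthonormalBasis.prodMeasurableEquiv_apply, dot, h0, h1]
  calc convZ g (ERT μ f) φ s = ∫ t, ∫ u, F (e (t, u)) := by
        simp only [convZ, ERT, hFe, integral_const_mul]
    _ = ∫ p : ℝ × ℝ, F (e p) :=
        (integral_prod _ ((he.integrable_comp_emb e.measurableEmbedding).2 hF)).symm
    _ = ∫ y, F y := he.integral_comp' F

lemma exp_mul_convZ_ERT (μ : ℝ) (hfm : Measurable f) (hfb : ∀ x, |f x| ≤ Mf)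
    (hfsupp : ∀ x ∉ Metric.closedBall (0 : R2) 1, f x = 0) (hgm : Measurable (uncurry g))
    (hgb : ∀ φ s, |g φ s| ≤ Mg) (x : R2) (φ : ℝ) :
    exp (-μ * dot x (thetaPerp φ)) * convZ g (ERT μ f) φ (dot x (theta φ))
      = ∫ y, exp (-μ * dot (x - y) (thetaPerp φ)) * g φ (dot (x - y) (theta φ)) * f y := by
  rw [convZ_ERT_eq_integral μ hfm hfb hfsupp hgm hgb, ← integral_const_mul]
  congr 1 with y
  simp only [dot, inner_sub_left]
  rw [show -μ * (inner ℝ x (thetaPerp φ) - inner ℝ y (thetaPerp φ))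
    = -μ * inner ℝ x (thetaPerp φ) + μ * inner ℝ y (thetaPerp φ) by ring, exp_add]
  ring

lemma integrable_dualERT_kernel (ρ : Measure ℝ) [IsFiniteMeasure ρ] (ν : ℝ) (x : R2)
    (hfm : Measurable f) (hfb : ∀ x, |f x| ≤ Mf)
    (hfsupp : ∀ x ∉ Metric.closedBall (0 : R2) 1, f x = 0) (hgm : Measurable (uncurry g))
    (hgb : ∀ φ s, |g φ s| ≤ Mg) :
    Integrable (fun p : ℝ × R2 =>
      exp (ν * dot (x - p.2) (thetaPerp p.1)) * g p.1 (dot (x - p.2) (theta p.1)) * f p.2)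
      (ρ.prod volume) := by
  refine integrable_of_abs_le_of_eq_zero_off (s := Set.univ ×ˢ Metric.closedBall 0 1)
    (MeasurableSet.univ.prod measurableSet_closedBall) ?_ ?_
    (exp (|ν| * (‖x‖ + 1)) * Mg * Mf) (fun p hp => ?_) (fun p hp => ?_)
  · rw [Measure.prod_prod]
    exact ENNReal.mul_ne_top (measure_ne_top _ _) measure_closedBall_lt_top.ne
  · have hθ : Continuous fun p : ℝ × R2 => dot (x - p.2) (theta p.1) :=
      (continuous_const.sub continuous_snd).inner (continuous_theta.comp continuous_fst)
    have hθ' : Continuous fun p : ℝ × R2 => dot (x - p.2) (thetaPerp p.1) :=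
      (continuous_const.sub continuous_snd).inner (continuous_thetaPerp.comp continuous_fst)
    exact ((continuous_const.mul hθ').rexp.measurable.mul
      (hgm.comp (measurable_fst.prodMk hθ.measurable))).mul
      (hfm.comp measurable_snd) |>.aestronglyMeasurable
  · have hMg : 0 ≤ Mg := (abs_nonneg _).trans (hgb 0 0)
    have hp2 : ‖p.2‖ ≤ 1 := mem_closedBall_zero_iff.1 (Set.mem_prod.1 hp).2
    have hdot : |dot (x - p.2) (thetaPerp p.1)| ≤ ‖x‖ + 1 :=
      (abs_dot_thetaPerp_le _ _).trans ((norm_sub_le _ _).trans (by linarith))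
    simp only [abs_mul, abs_exp]
    gcongr ?_ * ?_ * ?_
    · exact exp_mul_le_exp_abs_mul hdot
    · exact hgb _ _
    · exact hfb _
  · simp [hfsupp p.2 (by simpa using hp)]

end Transforms

theorem dual_conv_eq_conv_dual_general (μ : ℝ) (f : R2 → ℝ) (hfm : Measurable f)
    (Mf : ℝ) (hfb : ∀ x : R2, |f x| ≤ Mf)
    (hfsupp : ∀ x : R2, x ∉ Metric.closedBall (0 : R2) 1 → f x = 0)
    (g : ℝ → ℝ → ℝ) (hgm : Measurable (Function.uncurry g))
    (Mg : ℝ) (hgb : ∀ φ s : ℝ, |g φ s| ≤ Mg)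
    (x : R2) :
    dualERT (-μ) (convZ g (ERT μ f)) x = ∫ y : R2, dualERT (-μ) g (x - y) * f y := by
  have hπ : (0 : ℝ) ≤ 2 * π := by positivity
  calc dualERT (-μ) (convZ g (ERT μ f)) x
      = ∫ φ in Set.Ioc 0 (2 * π), ∫ y, exp (-μ * dot (x - y) (thetaPerp φ))
          * g φ (dot (x - y) (theta φ)) * f y := by
        simp only [dualERT, intervalIntegral.integral_of_le hπ,
          exp_mul_convZ_ERT μ hfm hfb hfsupp hgm hgb]
    _ = ∫ y, ∫ φ in Set.Ioc 0 (2 * π), exp (-μ * dot (x - y) (thetaPerp φ))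
          * g φ (dot (x - y) (theta φ)) * f y :=
        integral_integral_swap (integrable_dualERT_kernel _ _ x hfm hfb hfsupp hgm hgb)
    _ = ∫ y, dualERT (-μ) g (x - y) * f y := by
        simp only [dualERT, intervalIntegral.integral_of_le hπ, integral_mul_const]

/-- `T_{-μ}♯ (g ⋆ T_μ f) = (T_{-μ}♯ g) ⋆ f`, where the right-hand
convolution is on `ℝ²`. -/
theorem dual_conv_eq_conv_dual (μ : ℝ) (f : R2 → ℝ) (hfm : Measurable f)
    (Mf : ℝ) (hfb : ∀ x : R2, |f x| ≤ Mf)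
    (hfsupp : ∀ x : R2, x ∉ Metric.closedBall (0 : R2) 1 → f x = 0)
    (g : ℝ → ℝ → ℝ) (hgm : Measurable (Function.uncurry g))
    (Mg : ℝ) (hgb : ∀ φ s : ℝ, |g φ s| ≤ Mg)
    (K : Set ℝ) (hK : IsCompact K) (hgsupp : ∀ φ s : ℝ, s ∉ K → g φ s = 0)
    (x : R2) :
    dualERT (-μ) (convZ g (ERT μ f)) x = ∫ y : R2, dualERT (-μ) g (x - y) * f y :=
  dual_conv_eq_conv_dual_general μ f hfm Mf hfb hfsupp g hgm Mg hgb x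
end
end

section
/- Let β > 1, L > 0, η₀ ∈ H(β, L), x₀ ∈ ℝ², and let A, h be real numbers with 0 < A ≤ 1, 0 < h ≤ 1, and ‖x₀‖ + h ≤ 1. Define f₁(x) = A h^{β−1} η₀((x − x₀)/h). Then f₁ ∈ H(β, L). -/
open MeasureTheory Real Filter

noncomputable section

/-- The Fourier transform `f̃(ξ) = ∫_{ℝ²} f(x) e^{-i ξ·x} dx`. -/
def FT (f : R2 → ℝ) (ξ : R2) : ℂ :=
  ∫ x : R2, (f x : ℂ) * Complex.exp (-Complex.I * (dot ξ x : ℂ))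

/-- The class `H(β, L)`: functions vanishing outside the closed unit ball whose
Fourier transform satisfies `∫ (1 + ‖ξ‖²)^β |f̃(ξ)|² dξ ≤ L`. -/
def HClass (β L : ℝ) (f : R2 → ℝ) : Prop :=
  (∀ x : R2, x ∉ Metric.closedBall (0 : R2) 1 → f x = 0) ∧
  ∫ ξ : R2, (1 + ‖ξ‖ ^ 2) ^ β * ‖FT f ξ‖ ^ 2 ≤ L

/-! `f₁` is a translate of the dilate `η₀(·/h)` of `η₀` by `x₀`, so it is supported in
`closedBall x₀ h ⊆ closedBall 0 1`. On the Fourier side translation only contributes a unimodular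
factor and dilation gives `h² η̃₀(hξ)`; substituting `ζ = hξ` turns the weighted energy of `f₁`
into `A² ∫ (h² + ‖ζ‖²)^β |η̃₀(ζ)|² dζ`, the factor `h^{β-1}` exactly compensating the change of
weight. Since `h ≤ 1`, `A ≤ 1` and `β ≥ 0`, this is at most the energy of `η₀`. -/

theorem integral_mul_le_integral_of_bounds {α : Type*} [MeasurableSpace α] {μ : Measure α}
    {w g : α → ℝ} {ε : ℝ} (hε : 0 < ε) (hw : AEStronglyMeasurable w μ)
    (hεw : ∀ x, ε ≤ w x) (hw1 : ∀ x, w x ≤ 1) (hg : ∀ x, 0 ≤ g x) :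
    ∫ x, w x * g x ∂μ ≤ ∫ x, g x ∂μ := by
  by_cases hgi : Integrable g μ
  · exact integral_mono_of_nonneg (ae_of_all _ fun x => mul_nonneg (hε.le.trans (hεw x)) (hg x))
      hgi (ae_of_all _ fun x => mul_le_of_le_one_left (hg x) (hw1 x))
  · -- `g = w⁻¹ * (w * g)` with `w⁻¹ ≤ ε⁻¹`, so `w * g` is not integrable either.
    have hwgi : ¬ Integrable (fun x => w x * g x) μ := fun hwg => hgi <| by
      refine (hwg.bdd_mul (f := fun x => (w x)⁻¹) (c := ε⁻¹)
        hw.aemeasurable.inv.aestronglyMeasurable (ae_of_all _ fun x => ?_)).congr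
        (ae_of_all _ fun x => ?_)
      · have hwx : 0 < w x := hε.trans_le (hεw x)
        rw [norm_inv, Real.norm_of_nonneg hwx.le]
        exact inv_anti₀ hε (hεw x)
      · simp [inv_mul_cancel_left₀ (hε.trans_le (hεw x)).ne']
    rw [integral_undef hwgi, integral_undef hgi]

theorem FT_const_mul (c : ℝ) (f : R2 → ℝ) (ξ : R2) :
    FT (fun x => c * f x) ξ = c * FT f ξ := by
  simp only [FT, Complex.ofReal_mul, mul_assoc]
  exact integral_const_mul _ _

theorem FT_comp_sub (f : R2 → ℝ) (x₀ ξ : R2) :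
    FT (fun x => f (x - x₀)) ξ = Complex.exp (-Complex.I * (dot ξ x₀ : ℂ)) * FT f ξ := by
  rw [FT, ← integral_add_right_eq_self _ x₀, FT, ← integral_const_mul]
  congr 1 with y
  simp only [add_sub_cancel_right, dot, inner_add_right, Complex.ofReal_add, mul_add,
    Complex.exp_add]
  ring

theorem FT_comp_inv_smul (f : R2 → ℝ) {h : ℝ} (hh : h ≠ 0) (ξ : R2) :
    FT (fun x => f (h⁻¹ • x)) ξ = (h ^ 2 : ℝ) * FT f (h • ξ) := by
  have hdot : ∀ y : R2, dot ξ y = dot (h • ξ) (h⁻¹ • y) := fun y => by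
    simp only [dot, inner_smul_left, inner_smul_right, RCLike.conj_to_real]
    field_simp
  simp only [FT, hdot]
  rw [Measure.integral_comp_inv_smul volume (fun y => (f y : ℂ) *
      Complex.exp (-Complex.I * (dot (h • ξ) y : ℂ))) h, finrank_euclideanSpace_fin,
    abs_of_nonneg (sq_nonneg h), Complex.real_smul]

theorem norm_FT_comp_inv_smul_sub (f : R2 → ℝ) {h : ℝ} (hh : h ≠ 0) (x₀ ξ : R2) :
    ‖FT (fun x => f (h⁻¹ • (x - x₀))) ξ‖ = h ^ 2 * ‖FT f (h • ξ)‖ := by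
  rw [FT_comp_sub (fun y => f (h⁻¹ • y)), FT_comp_inv_smul f hh, norm_mul, norm_mul,
    Complex.norm_exp, Complex.norm_real, Real.norm_of_nonneg (sq_nonneg h)]
  simp

def sobolevIntegral (a β : ℝ) (f : R2 → ℝ) : ℝ :=
  ∫ ξ : R2, (a + ‖ξ‖ ^ 2) ^ β * ‖FT f ξ‖ ^ 2

theorem sobolevIntegral_nonneg {a : ℝ} (ha : 0 ≤ a) (β : ℝ) (f : R2 → ℝ) :
    0 ≤ sobolevIntegral a β f :=
  integral_nonneg fun _ => by positivity

theorem sobolevIntegral_const_mul (a β c : ℝ) (f : R2 → ℝ) :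
    sobolevIntegral a β (fun x => c * f x) = c ^ 2 * sobolevIntegral a β f := by
  simp only [sobolevIntegral, FT_const_mul, norm_mul, Complex.norm_real, Real.norm_eq_abs,
    mul_pow, sq_abs, ← integral_const_mul]
  congr 1 with ξ
  ring

theorem sobolevIntegral_comp_inv_smul_sub {a : ℝ} (ha : 0 ≤ a) (β : ℝ) (f : R2 → ℝ) {h : ℝ}
    (hh : h ≠ 0) (x₀ : R2) :
    sobolevIntegral a β (fun x => f (h⁻¹ • (x - x₀)))
      = (h ^ 2) ^ (1 - β) * sobolevIntegral (a * h ^ 2) β f := by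
  have hh2 : 0 < h ^ 2 := by positivity
  have hweight : ∀ ξ : R2, (a * h ^ 2 + ‖h • ξ‖ ^ 2) ^ β = (h ^ 2) ^ β * (a + ‖ξ‖ ^ 2) ^ β :=
    fun ξ => by
      rw [norm_smul, Real.norm_eq_abs, mul_pow, sq_abs, ← Real.mul_rpow hh2.le (by positivity)]
      ring_nf
  have hpow : (h ^ 2) ^ (2 : ℝ) = (h ^ 2) ^ (2 - β) * (h ^ 2) ^ β := by
    rw [← Real.rpow_add hh2, sub_add_cancel]
  calc sobolevIntegral a β (fun x => f (h⁻¹ • (x - x₀)))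
      = ∫ ξ : R2, (h ^ 2) ^ (2 - β) *
          ((a * h ^ 2 + ‖h • ξ‖ ^ 2) ^ β * ‖FT f (h • ξ)‖ ^ 2) := by
        rw [sobolevIntegral]
        congr 1 with ξ
        rw [norm_FT_comp_inv_smul_sub f hh, hweight, mul_pow, ← Real.rpow_natCast (h ^ 2) 2,
          Nat.cast_ofNat, hpow]
        ring
    _ = (h ^ 2) ^ (1 - β) * sobolevIntegral (a * h ^ 2) β f := by
        rw [integral_const_mul, Measure.integral_comp_smul volume
          (fun ζ => (a * h ^ 2 + ‖ζ‖ ^ 2) ^ β * ‖FT f ζ‖ ^ 2), finrank_euclideanSpace_fin,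
          sobolevIntegral, smul_eq_mul, ← mul_assoc, abs_of_pos (inv_pos.2 hh2),
          ← Real.rpow_neg_one, ← Real.rpow_add hh2]
        ring_nf

theorem sobolevIntegral_mono {a b β : ℝ} (ha : 0 < a) (hab : a ≤ b) (hβ : 0 ≤ β)
    (f : R2 → ℝ) : sobolevIntegral a β f ≤ sobolevIntegral b β f := by
  have hb : 0 < b := ha.trans_le hab
  have hratio : ∀ ξ : R2, (a + ‖ξ‖ ^ 2) ^ β
      = ((a + ‖ξ‖ ^ 2) / (b + ‖ξ‖ ^ 2)) ^ β * (b + ‖ξ‖ ^ 2) ^ β := fun ξ => by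
    rw [Real.div_rpow (by positivity) (by positivity), div_mul_cancel₀ _ (by positivity)]
  simp only [sobolevIntegral, hratio, mul_assoc]
  refine integral_mul_le_integral_of_bounds (ε := (a / b) ^ β) (by positivity)
    (Measurable.aestronglyMeasurable (by fun_prop)) (fun ξ => ?_) (fun ξ => ?_)
    (fun ξ => by positivity)
  · refine Real.rpow_le_rpow (by positivity) ?_ hβ
    rw [div_le_div_iff₀ hb (by positivity)]
    nlinarith [sq_nonneg ‖ξ‖]
  · exact Real.rpow_le_one (by positivity) ((div_le_one (by positivity)).2 (by linarith)) hβ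

theorem mem_closedBall_of_inv_smul_sub_mem {E : Type*} [NormedAddCommGroup E] [NormedSpace ℝ E]
    {x x₀ : E} {h : ℝ} (hh : 0 < h) (hx : h⁻¹ • (x - x₀) ∈ Metric.closedBall (0 : E) 1) :
    x ∈ Metric.closedBall x₀ h := by
  rw [mem_closedBall_zero_iff, norm_smul, Real.norm_of_nonneg (inv_nonneg.2 hh.le),
    inv_mul_le_iff₀ hh, mul_one] at hx
  rwa [Metric.mem_closedBall, dist_eq_norm]

theorem scaled_bump_mem_HClass_general (β L : ℝ) (hβ : 1 < β)
    (η₀ : R2 → ℝ) (hη₀ : HClass β L η₀) (x₀ : R2) (A h : ℝ)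
    (hA : 0 < A) (hA1 : A ≤ 1) (hh : 0 < h) (hh1 : h ≤ 1) (hx₀ : ‖x₀‖ + h ≤ 1) :
    HClass β L (fun x : R2 => A * h ^ (β - 1) * η₀ (h⁻¹ • (x - x₀))) := by
  obtain ⟨hsupp, henergy⟩ := hη₀
  refine ⟨fun x hx => ?_, ?_⟩
  · have hball : Metric.closedBall x₀ h ⊆ Metric.closedBall 0 1 :=
      Metric.closedBall_subset_closedBall' (by rwa [dist_zero_right, add_comm])
    beta_reduce
    rw [hsupp _ fun hmem => hx (hball (mem_closedBall_of_inv_smul_sub_mem hh hmem)), mul_zero]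
  · have hh2 : 0 < h ^ 2 := by positivity
    have hcancel : (A * h ^ (β - 1)) ^ 2 * (h ^ 2) ^ (1 - β) = A ^ 2 := by
      rw [mul_pow, Real.rpow_pow_comm hh.le, mul_assoc, ← Real.rpow_add hh2, sub_add_sub_cancel,
        sub_self, Real.rpow_zero, mul_one]
    calc sobolevIntegral 1 β (fun x => A * h ^ (β - 1) * η₀ (h⁻¹ • (x - x₀)))
        = A ^ 2 * sobolevIntegral (h ^ 2) β η₀ := by
          rw [sobolevIntegral_const_mul, sobolevIntegral_comp_inv_smul_sub zero_le_one _ _ hh.ne',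
            one_mul, ← mul_assoc, hcancel]
      _ ≤ sobolevIntegral (h ^ 2) β η₀ :=
          mul_le_of_le_one_left (sobolevIntegral_nonneg hh2.le _ _) (by nlinarith)
      _ ≤ sobolevIntegral 1 β η₀ :=
          sobolevIntegral_mono hh2 (pow_le_one₀ hh.le hh1) (by linarith) η₀
      _ ≤ L := henergy

/-- if `η₀ ∈ H(β, L)`, `0 < A ≤ 1`, `0 < h ≤ 1` and `‖x₀‖ + h ≤ 1`, then
`f₁(x) = A h^{β-1} η₀((x - x₀)/h)` belongs to `H(β, L)`. -/
theorem scaled_bump_mem_HClass (β L : ℝ) (hβ : 1 < β) (hL : 0 < L)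
    (η₀ : R2 → ℝ) (hη₀ : HClass β L η₀) (x₀ : R2) (A h : ℝ)
    (hA : 0 < A) (hA1 : A ≤ 1) (hh : 0 < h) (hh1 : h ≤ 1) (hx₀ : ‖x₀‖ + h ≤ 1) :
    HClass β L (fun x : R2 => A * h ^ (β - 1) * η₀ (h⁻¹ • (x - x₀))) :=
  scaled_bump_mem_HClass_general β L hβ η₀ hη₀ x₀ A h hA hA1 hh hh1 hx₀
end
end

section
/- For every C₄ > 0 there exists C₆ > 0 (depending only on C₄) with the following property: for every real m ≥ 1, every natural number M with M ≥ C₄ m², every family Δ₁, …, Δ_M of pairwise disjoint closed balls of radius 1/m contained in the closed unit ball of ℝ², every n ≥ 1, and every family of n lines L₁, …, Lₙ in ℝ², the number of indices k ∈ {1, …, M} such that Δ_k intersects at most C₆ n/m of the lines L₁, …, Lₙ is strictly greater than M/2. -/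
/-!
A line `x · u = s` meets few balls: the centres of the balls of radius `r` it meets lie in a
`2r × 2` rectangle aligned with the line, and since they are `2r`-separated, each `r × r` cell
of the aligned grid contains at most one of them, so at most `3 (2/r + 1) ≤ 9/r` balls meet the
line. Hence the `n` lines have at most `9 m n` incidences with the balls, and by Markov's
inequality at most `9 C₄ m² / 20 ≤ 9 M / 20` balls meet more than `20 n / (C₄ m)` lines.
-/

open MeasureTheory Real Filter

noncomputable section

open Finset Metric

theorem card_sub_div_le_ncard_ncard_le {α β : Type*} [Fintype α] [Fintype β]
    (r : β → α → Prop) {B t : ℝ} (ht : 0 < t)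
    (hB : ∀ a, ({b | r b a}.ncard : ℝ) ≤ B) :
    (Fintype.card β : ℝ) - Fintype.card α * B / t ≤
      {b | ({a | r b a}.ncard : ℝ) ≤ t}.ncard := by
  classical
  simp only [Set.ncard_eq_toFinset_card', Set.toFinset_ofPred] at hB ⊢
  set bad : Finset β := {b | ¬ (#{a | r b a} : ℝ) ≤ t}
  have hbad : #bad • t ≤ #(univ : Finset α) • B := by
    refine card_nsmul_le_card_nsmul r (fun b hb => ?_) (fun a _ => ?_)
    · simp only [bad, mem_filter, mem_univ, true_and, not_le] at hb
      exact hb.le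
    · exact (Nat.cast_le.mpr (card_le_card (filter_subset_filter _ (subset_univ _)))).trans
        (hB a)
  have hsplit := card_filter_add_card_filter_not (s := (univ : Finset β))
    (fun b => (#{a | r b a} : ℝ) ≤ t)
  rw [card_univ] at hsplit hbad
  rw [nsmul_eq_mul, nsmul_eq_mul, ← le_div_iff₀ ht] at hbad
  rw [← hsplit]
  push_cast
  linarith

theorem sub_sq_lt_sq_of_natFloor_div_eq {f g r : ℝ} (hr : 0 < r) (hf : 0 ≤ f) (hg : 0 ≤ g)
    (h : ⌊f / r⌋₊ = ⌊g / r⌋₊) : (f - g) ^ 2 < r ^ 2 := by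
  have := Int.abs_sub_lt_one_of_floor_eq_floor (a := f / r) (b := g / r) (by
    rw [← Int.natCast_floor_eq_floor (by positivity),
      ← Int.natCast_floor_eq_floor (by positivity), h])
  rw [← sub_div, abs_div, abs_of_pos hr, div_lt_one hr] at this
  exact sq_lt_sq' (abs_lt.mp this).1 (abs_lt.mp this).2

namespace R2

def perp (u : R2) : R2 := (WithLp.equiv 2 _).symm ![-u 1, u 0]

@[simp] lemma perp_apply_zero (u : R2) : perp u 0 = -u 1 := by simp [perp]
@[simp] lemma perp_apply_one (u : R2) : perp u 1 = u 0 := by simp [perp]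

lemma dot_eq (x y : R2) : dot x y = x 0 * y 0 + x 1 * y 1 := by
  simp [dot, PiLp.inner_apply, Fin.sum_univ_two, mul_comm]

lemma dot_sub_left (x y u : R2) : dot (x - y) u = dot x u - dot y u := inner_sub_left x y u

lemma abs_dot_le_norm (x : R2) {u : R2} (hu : ‖u‖ = 1) : |dot x u| ≤ ‖x‖ := by
  simpa [dot, hu] using abs_real_inner_le_norm x u

lemma norm_sq_eq (v : R2) : ‖v‖ ^ 2 = v 0 ^ 2 + v 1 ^ 2 := by
  simp [EuclideanSpace.norm_sq_eq, Fin.sum_univ_two]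

lemma norm_perp (u : R2) : ‖perp u‖ = ‖u‖ := by
  rw [← sq_eq_sq₀ (norm_nonneg _) (norm_nonneg _), norm_sq_eq, norm_sq_eq]
  simp only [perp_apply_zero, perp_apply_one]
  ring

lemma norm_sq_eq_dot_sq_add_dot_perp_sq {u : R2} (hu : ‖u‖ = 1) (v : R2) :
    ‖v‖ ^ 2 = dot v u ^ 2 + dot v (perp u) ^ 2 := by
  have h := norm_sq_eq u
  rw [hu] at h
  rw [norm_sq_eq, dot_eq, dot_eq, perp_apply_zero, perp_apply_one]
  linear_combination (v 0 ^ 2 + v 1 ^ 2) * h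

end R2

open R2

theorem card_le_of_separated_of_mem_box {ι : Type*} (S : Finset ι) (p : ι → R2) {u : R2}
    (hu : ‖u‖ = 1) {r w h a b : ℝ} (hr : 0 < r) (hw : 0 ≤ w) (hh : 0 ≤ h)
    (hsep : (S : Set ι).Pairwise fun k l => 2 * r < dist (p k) (p l))
    (hbox : ∀ k ∈ S,
      dot (p k) u ∈ Set.Icc a (a + w) ∧ dot (p k) (perp u) ∈ Set.Icc b (b + h)) :
    (#S : ℝ) ≤ (w / r + 1) * (h / r + 1) := by
  set cell : ι → ℕ × ℕ := fun k =>
    (⌊(dot (p k) u - a) / r⌋₊, ⌊(dot (p k) (perp u) - b) / r⌋₊)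
  have hmaps : Set.MapsTo cell S
      (range (⌊w / r⌋₊ + 1) ×ˢ range (⌊h / r⌋₊ + 1) : Finset (ℕ × ℕ)) := by
    intro k hk
    obtain ⟨⟨-, hxw⟩, ⟨-, hyh⟩⟩ := hbox k hk
    rw [mem_coe, mem_product, mem_range, mem_range, Nat.lt_succ_iff, Nat.lt_succ_iff]
    exact ⟨Nat.floor_le_floor (div_le_div_of_nonneg_right (by linarith) hr.le),
      Nat.floor_le_floor (div_le_div_of_nonneg_right (by linarith) hr.le)⟩
  have hinj : Set.InjOn cell S := by
    intro k hk l hl hkl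
    by_contra hne
    obtain ⟨⟨hxk, -⟩, ⟨hyk, -⟩⟩ := hbox k hk
    obtain ⟨⟨hxl, -⟩, ⟨hyl, -⟩⟩ := hbox l hl
    have hx := sub_sq_lt_sq_of_natFloor_div_eq hr (sub_nonneg.mpr hxk) (sub_nonneg.mpr hxl)
      (congrArg Prod.fst hkl)
    have hy := sub_sq_lt_sq_of_natFloor_div_eq hr (sub_nonneg.mpr hyk) (sub_nonneg.mpr hyl)
      (congrArg Prod.snd hkl)
    have hd : (2 * r) ^ 2 < dist (p k) (p l) ^ 2 := by
      have := hsep hk hl hne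
      gcongr
    rw [dist_eq_norm, norm_sq_eq_dot_sq_add_dot_perp_sq hu, dot_sub_left, dot_sub_left] at hd
    nlinarith
  calc (#S : ℝ) ≤ #(range (⌊w / r⌋₊ + 1) ×ˢ range (⌊h / r⌋₊ + 1)) := by
        exact_mod_cast card_le_card_of_injOn _ hmaps hinj
    _ ≤ (w / r + 1) * (h / r + 1) := by
        push_cast [card_product, card_range]
        gcongr <;> exact Nat.floor_le (by positivity)

theorem card_balls_meeting_line_le {ι : Type*} [Fintype ι] {r : ℝ} (hr : 0 < r) (hr1 : r ≤ 1)
    (c : ι → R2) (hsub : ∀ k, closedBall (c k) r ⊆ closedBall 0 1)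
    (hdisj : Pairwise fun k l => Disjoint (closedBall (c k) r) (closedBall (c l) r))
    {u : R2} (hu : ‖u‖ = 1) (s : ℝ) :
    ({k | (closedBall (c k) r ∩ {x | dot x u = s}).Nonempty}.ncard : ℝ) ≤ 9 / r := by
  classical
  rw [Set.ncard_eq_toFinset_card', Set.toFinset_ofPred]
  have hsep : Pairwise fun k l => 2 * r < dist (c k) (c l) := fun k l hkl => by
    linarith [(disjoint_closedBall_closedBall_iff hr.le hr.le).mp (hdisj hkl)]
  have hbox : ∀ k ∈ ({k | (closedBall (c k) r ∩ {x | dot x u = s}).Nonempty} : Finset ι),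
      dot (c k) u ∈ Set.Icc (s - r) (s - r + 2 * r) ∧
        dot (c k) (perp u) ∈ Set.Icc (-1) (-1 + 2) := by
    intro k hk
    obtain ⟨x, hxc, hxs : dot x u = s⟩ := (mem_filter.mp hk).2
    have hnear : |dot (c k) u - s| ≤ r := by
      rw [← hxs, ← dot_sub_left]
      exact (abs_dot_le_norm _ hu).trans (by rwa [← dist_eq_norm, dist_comm, ← mem_closedBall])
    have hck : |dot (c k) (perp u)| ≤ 1 := by
      refine (abs_dot_le_norm _ ((norm_perp u).trans hu)).trans ?_
      simpa using hsub k (mem_closedBall_self hr.le)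
    constructor <;> constructor <;> linarith [abs_le.mp hnear, abs_le.mp hck]
  refine (card_le_of_separated_of_mem_box _ c hu hr (by positivity) zero_le_two
    (fun k _ l _ hkl => hsep hkl) hbox).trans ?_
  rw [mul_div_cancel_right₀ _ hr.ne', div_add_one hr.ne', ← mul_div_assoc,
    div_le_div_iff_of_pos_right hr]
  linarith

/-- for any family of `M ≥ C₄ m²` disjoint balls of radius `1/m` in the unit
ball and any `n` lines, more than `M/2` of the balls meet at most `C₆ n/m` of the lines. -/
theorem many_balls_meet_few_lines (C₄ : ℝ) (hC₄ : 0 < C₄) :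
    ∃ C₆ : ℝ, 0 < C₆ ∧
      ∀ m : ℝ, 1 ≤ m → ∀ M : ℕ, C₄ * m ^ 2 ≤ M →
        ∀ c : Fin M → R2,
          (∀ k : Fin M, Metric.closedBall (c k) (1 / m) ⊆ Metric.closedBall (0 : R2) 1) →
          (∀ k l : Fin M, k ≠ l →
            Disjoint (Metric.closedBall (c k) (1 / m)) (Metric.closedBall (c l) (1 / m))) →
          ∀ n : ℕ, 1 ≤ n → ∀ u : Fin n → R2, (∀ i : Fin n, ‖u i‖ = 1) →
            ∀ s : Fin n → ℝ,
              (M : ℝ) / 2 <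
                ({k : Fin M |
                    (({i : Fin n |
                        (Metric.closedBall (c k) (1 / m) ∩
                          {x : R2 | dot x (u i) = s i}).Nonempty} : Set (Fin n)).ncard : ℝ)
                      ≤ C₆ * n / m} : Set (Fin M)).ncard := by
  refine ⟨20 / C₄, by positivity, fun m hm M hM c hsub hdisj n hn u hu s => ?_⟩
  have hm0 : 0 < m := by linarith
  have hn0 : (0 : ℝ) < n := by exact_mod_cast hn
  have hgood := card_sub_div_le_ncard_ncard_le
    (fun k i => (closedBall (c k) (1 / m) ∩ {x | dot x (u i) = s i}).Nonempty)
    (t := 20 / C₄ * n / m) (by positivity) fun i =>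
      card_balls_meeting_line_le (by positivity) ((div_le_one hm0).mpr hm) c hsub hdisj
        (hu i) (s i)
  have hbad : (n : ℝ) * (9 / (1 / m)) / (20 / C₄ * n / m) = 9 / 20 * (C₄ * m ^ 2) := by
    field_simp
  rw [Fintype.card_fin, Fintype.card_fin, hbad] at hgood
  have hM0 : (0 : ℝ) < M := hM.trans_lt' (by positivity)
  linarith

end
end
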